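/- In a DAG with single source and single sink, if ⟨s, e'⟩ and ⟨s, e⟩ both satisfy the reachability, matching and acyclicity conditions of a superbubble and ordD[e] = ordD[e'] + 1 in a topological ordering whose interval property holds, then e is the only child of e' and e' is the only parent of e; hence ⟨e', e⟩ is a superbubble. -/

import Mathlib

/-- `v` is reachable from `s` by a directed path whose internal vertices
(all vertices except the endpoints) avoid `avoid`. -/
def ReachWithout {V : Type*} (E : V → V → Prop) (avoid s v : V) : Prop :=
  s = v ∨ ∃ w, Relation.ReflTransGen (fun a b => E a b ∧ b ≠ avoid) s w ∧ E w v

/-- `t` is reachable from `v` by a directed path whose internal vertices avoid `avoid`. -/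
def CoReachWithout {V : Type*} (E : V → V → Prop) (avoid v t : V) : Prop :=
  v = t ∨ ∃ w, E v w ∧ Relation.ReflTransGen (fun a b => E a b ∧ a ≠ avoid) w t

/-- The subgraph induced by `U` is acyclic. -/
def AcyclicOn {V : Type*} (E : V → V → Prop) (U : Set V) : Prop :=
  ∀ v, ¬ Relation.TransGen (fun a b => E a b ∧ a ∈ U ∧ b ∈ U) v v

/-- The directed graph is acyclic. -/
def Acyclic {V : Type*} (E : V → V → Prop) : Prop :=
  ∀ v, ¬ Relation.TransGen E v v

/-- The reachability, matching and acyclicity conditions of a superbubble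
(Definition 1, without minimality). -/
def SBCore {V : Type*} (E : V → V → Prop) (s t : V) : Prop :=
  s ≠ t ∧ Relation.TransGen E s t ∧
  (∀ v, ReachWithout E t s v ↔ CoReachWithout E s v t) ∧
  AcyclicOn E {v | ReachWithout E t s v}

/-- `⟨s, t⟩` is a superbubble: reachability, matching, acyclicity and minimality. -/
def Superbubble {V : Type*} (E : V → V → Prop) (s t : V) : Prop :=
  SBCore E s t ∧ ∀ t', ReachWithout E t s t' → t' ≠ t → ¬ SBCore E s t'

/-! Both exits lie in the ordD-interval of `⟨s, e⟩`, and `e` is the only vertex of that interval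
ranked above `e'`; hence every child of `e'` is `e`. Conversely a parent `u ≠ e'` of `e` would be
ranked at most `ordD e'`, so it lies in the interval of `⟨s, e'⟩`, and the path through it would
reach `e` without passing `e'`, contradicting the matching condition of `⟨s, e'⟩`. With a single
edge `e' → e` and no other edges at its ends, `⟨e', e⟩` is trivially a superbubble. -/

section

variable {V : Type*} {E : V → V → Prop}

theorem lt_of_transGen_of_forall_lt {β : Type*} [Preorder β] {R : V → V → Prop} {f : V → β}
    (hf : ∀ a b, R a b → f a < f b) {a b : V} (h : Relation.TransGen R a b) : f a < f b := by
  induction h with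
  | single hab => exact hf _ _ hab
  | tail _ hbc ih => exact ih.trans (hf _ _ hbc)

theorem le_of_reflTransGen_of_forall_lt {β : Type*} [Preorder β] {R : V → V → Prop} {f : V → β}
    (hf : ∀ a b, R a b → f a < f b) {a b : V} (h : Relation.ReflTransGen R a b) : f a ≤ f b := by
  rcases Relation.reflTransGen_iff_eq_or_transGen.mp h with rfl | h
  · exact le_rfl
  · exact (lt_of_transGen_of_forall_lt hf h).le

theorem ReachWithout.tail {t s w v : V} (hw : ReachWithout E t s w) (hwt : w ≠ t) (hwv : E w v) :
    ReachWithout E t s v := by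
  rcases hw with rfl | ⟨w', hsw', hw'w⟩
  · exact Or.inr ⟨s, .refl, hwv⟩
  · exact Or.inr ⟨w, hsw'.tail ⟨hw'w, hwt⟩, hwv⟩

theorem coReachWithout_of_edge {s u t : V} (hut : E u t) : CoReachWithout E s u t :=
  Or.inr ⟨t, hut, .refl⟩

theorem reachWithout_iff_of_unique_child {a b : V} (hab : E a b) (hchild : ∀ u, E a u → u = b)
    (v : V) : ReachWithout E b a v ↔ v = a ∨ v = b := by
  have hstuck : ∀ w, Relation.ReflTransGen (fun x y => E x y ∧ y ≠ b) a w → w = a := by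
    intro w h
    rcases Relation.ReflTransGen.cases_head h with rfl | ⟨c, hac, _⟩
    · rfl
    · exact absurd (hchild c hac.1) hac.2
  constructor
  · rintro (rfl | ⟨w, haw, hwv⟩)
    · exact Or.inl rfl
    · rw [hstuck w haw] at hwv
      exact Or.inr (hchild v hwv)
  · rintro (rfl | rfl)
    · exact Or.inl rfl
    · exact Or.inr ⟨a, .refl, hab⟩

theorem coReachWithout_iff_of_unique_parent {a b : V} (hab : E a b)
    (hparent : ∀ u, E u b → u = a) (v : V) : CoReachWithout E a v b ↔ v = a ∨ v = b := by
  have hstuck : ∀ w, Relation.ReflTransGen (fun x y => E x y ∧ x ≠ a) w b → w = b := by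
    intro w h
    rcases Relation.ReflTransGen.cases_tail h with rfl | ⟨c, _, hcb⟩
    · rfl
    · exact absurd (hparent c hcb.1) hcb.2
  constructor
  · rintro (rfl | ⟨w, hvw, hwb⟩)
    · exact Or.inr rfl
    · rw [hstuck w hwb] at hvw
      exact Or.inl (hparent v hvw)
  · rintro (rfl | rfl)
    · exact coReachWithout_of_edge hab
    · exact Or.inl rfl

section Ordering

variable {ord : V → ℕ} (htopo : ∀ a b, E a b → ord a < ord b)
include htopo

theorem acyclicOn_of_topological (U : Set V) : AcyclicOn E U := fun _ hv =>
  (lt_of_transGen_of_forall_lt (fun a b hab => htopo a b hab.1) hv).false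

theorem SBCore.ord_le_of_reachWithout {s t v : V} (h : SBCore E s t)
    (hv : ReachWithout E t s v) : ord v ≤ ord t := by
  rcases (h.2.2.1 v).mp hv with rfl | ⟨w, hvw, hwt⟩
  · exact le_rfl
  · exact ((htopo _ _ hvw).trans_le
      (le_of_reflTransGen_of_forall_lt (fun a b hab => htopo a b hab.1) hwt)).le

theorem superbubble_of_unique_edge {a b : V} (hab : E a b) (hchild : ∀ u, E a u → u = b)
    (hparent : ∀ u, E u b → u = a) : Superbubble E a b := by
  have hreach := reachWithout_iff_of_unique_child hab hchild
  refine ⟨⟨fun h => (htopo _ _ hab).ne (congrArg ord h), .single hab, fun v => ?_,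
    acyclicOn_of_topological htopo _⟩, fun t' ht' hne hcore => ?_⟩
  · rw [hreach, coReachWithout_iff_of_unique_parent hab hparent]
  · rcases (hreach t').mp ht' with rfl | rfl
    · exact hcore.1 rfl
    · exact hne rfl

end Ordering

end

theorem consecutive_exits_superbubble_general {V : Type*} (E : V → V → Prop)
    (ordD : V → ℕ) (hinj : Function.Injective ordD)
    (htopo : ∀ a b, E a b → ordD a < ordD b)
    (hInterval : ∀ a b : V, SBCore E a b →
      {v : V | ReachWithout E b a v} = {v : V | ordD a ≤ ordD v ∧ ordD v ≤ ordD b})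
    (s e e' : V)
    (h1 : SBCore E s e) (h2 : SBCore E s e')
    (ho1 : ordD s < ordD e') (hadj : ordD e = ordD e' + 1) :
    (∀ u, E e' u ↔ u = e) ∧ (∀ u, E u e ↔ u = e') ∧ Superbubble E e' e := by
  have hne : e' ≠ e := fun h => by rw [h] at hadj; omega
  have hI (a b) (h : SBCore E a b) (v) := Set.ext_iff.mp (hInterval a b h) v
  have he' : ReachWithout E e s e' := (hI s e h1 e').mpr ⟨ho1.le, by omega⟩
  have hchild : ∀ u, E e' u → u = e := fun u hu => by
    by_contra hue
    have := h1.ord_le_of_reachWithout htopo (he'.tail hne hu)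
    exact hue (hinj (by have := htopo _ _ hu; omega))
  have hedge : E e' e := by
    rcases (h1.2.2.1 e').mp he' with h | ⟨w, hw, -⟩
    · exact absurd h hne
    · rwa [hchild w hw] at hw
  have hparent : ∀ u, E u e → u = e' := fun u hu => by
    by_contra hue
    have hu_s : ordD s ≤ ordD u := ((hI s e h1 u).mp ((h1.2.2.1 u).mpr
      (coReachWithout_of_edge hu))).1
    have hu' : ReachWithout E e' s u := (hI s e' h2 u).mpr ⟨hu_s, by have := htopo _ _ hu; omega⟩
    have := h2.ord_le_of_reachWithout htopo (hu'.tail hue hu)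
    omega
  exact ⟨fun u => ⟨hchild u, fun h => h ▸ hedge⟩, fun u => ⟨hparent u, fun h => h ▸ hedge⟩,
    superbubble_of_unique_edge htopo hedge hchild hparent⟩

/-- If ⟨s, e'⟩ and ⟨s, e⟩ both satisfy the reachability, matching and acyclicity
conditions of a superbubble and ordD e = ordD e' + 1 in a topological ordering with the
interval property, then e is the only child of e' and e' is the only parent of e;
hence ⟨e', e⟩ is a superbubble. -/
theorem consecutive_exits_superbubble {V : Type*} [Fintype V] (E : V → V → Prop)
    (hA : Acyclic E)
    (hSource : ∃! r : V, ∀ u, ¬ E u r)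
    (hSink : ∃! q : V, ∀ u, ¬ E q u)
    (ordD : V → ℕ) (hinj : Function.Injective ordD)
    (htopo : ∀ a b, E a b → ordD a < ordD b)
    (hInterval : ∀ a b : V, SBCore E a b →
      {v : V | ReachWithout E b a v} = {v : V | ordD a ≤ ordD v ∧ ordD v ≤ ordD b})
    (s e e' : V)
    (h1 : SBCore E s e) (h2 : SBCore E s e')
    (ho1 : ordD s < ordD e') (hadj : ordD e = ordD e' + 1) :
    (∀ u, E e' u ↔ u = e) ∧ (∀ u, E u e ↔ u = e') ∧ Superbubble E e' e :=
  consecutive_exits_superbubble_general E ordD hinj htopo hInterval s e e' h1 h2 ho1 hadj
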